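/- arXiv:1511.03622 — 3 statements merged into one kernel-verified Lean document; each statement's English description precedes it below -/
import Mathlib

section
/- With notation as in the context, set S := Inv N, S̄ := ι(S), N̄ := ι((P₁ ∪ (X \ int N)) ∩ N) and P̄ := (ι(P₁), ι(P₂)). Then P̄ is a weak index pair for F̄ in N̄, i.e. ι(P₂) ⊆ ι(P₁) ⊆ N̄ are compact subsets of X̄ satisfying: (a) F̄(ι(Pᵢ)) ∩ N̄ ⊆ ι(Pᵢ) for i = 1,2; (b) bd_{F̄}(ι(P₁)) ⊆ ι(P₂); (c) Inv_{F̄} N̄ ⊆ int_{X̄}(ι(P₁) \ ι(P₂)); (d) ι(P₁) \ ι(P₂) ⊆ int_{X̄} N̄. -/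
open Set Topology

/-- The image of a set under a multivalued map. -/
def MVImage {Y : Type*} (F : Y → Set Y) (A : Set Y) : Set Y :=
  ⋃ y ∈ A, F y

/-- Upper semicontinuity of a multivalued map: the large counter image of every
closed set is closed. -/
def IsUSC {Y : Type*} [TopologicalSpace Y] (F : Y → Set Y) : Prop :=
  ∀ B : Set Y, IsClosed B → IsClosed {y | (F y ∩ B).Nonempty}

/-- The invariant part of `N` with respect to `F`: points admitting a full
solution (in `N`) through them. -/
def InvPart {Y : Type*} (F : Y → Set Y) (N : Set Y) : Set Y :=
  {y | ∃ σ : ℤ → Y, (∀ n : ℤ, σ n ∈ N) ∧ σ 0 = y ∧ ∀ n : ℤ, σ (n + 1) ∈ F (σ n)}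

/-- The `F`-boundary of a set `A`: `cl A ∩ cl (F(A) \ A)`. -/
def FBoundary {Y : Type*} [TopologicalSpace Y] (F : Y → Set Y) (A : Set Y) : Set Y :=
  closure A ∩ closure (MVImage F A \ A)

/-- `(P₁, P₂)` is a weak index pair for `F` in `N`. -/
structure IsWeakIndexPair {Y : Type*} [TopologicalSpace Y] (F : Y → Set Y)
    (N P₁ P₂ : Set Y) : Prop where
  compact₁ : IsCompact P₁
  compact₂ : IsCompact P₂
  subset₂₁ : P₂ ⊆ P₁
  subset₁N : P₁ ⊆ N
  mapsInto₁ : MVImage F P₁ ∩ N ⊆ P₁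
  mapsInto₂ : MVImage F P₂ ∩ N ⊆ P₂
  fBoundary_subset : FBoundary F P₁ ⊆ P₂
  inv_subset : InvPart F N ⊆ interior (P₁ \ P₂)
  diff_subset : P₁ \ P₂ ⊆ interior N

/-- The function `μ(x,t) = t + (1-t)α(x)`. -/
def muBar {X : Type*} (α : X → ℝ) (p : X × ℝ) : ℝ :=
  p.2 + (1 - p.2) * α p.1

/-- The multivalued map `F̄(x,t) := F(x) × {μ(x,t)}` (defined on `X × ℝ`). -/
def FBar {X : Type*} (F : X → Set X) (α : X → ℝ) (p : X × ℝ) : Set (X × ℝ) :=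
  F p.1 ×ˢ {muBar α p}

/-- The space `X̄ = (P₁\P₂)×{0} ∪ (P₂ ∪ (X \ int N))×[0,1] ∪ X×{1}`,
as a subset of `X × ℝ`. -/
def XBarSet {X : Type*} [TopologicalSpace X] (N P₁ P₂ : Set X) : Set (X × ℝ) :=
  (P₁ \ P₂) ×ˢ {(0 : ℝ)} ∪ (P₂ ∪ (interior N)ᶜ) ×ˢ Icc (0 : ℝ) 1 ∪
    univ ×ˢ {(1 : ℝ)}

/-- The map `F̄` viewed as a multivalued map of the subspace `X̄` into itself. -/
def FBarSub {X : Type*} [TopologicalSpace X] (F : X → Set X) (α : X → ℝ)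
    (N P₁ P₂ : Set X) (q : XBarSet N P₁ P₂) : Set (XBarSet N P₁ P₂) :=
  {r | (r : X × ℝ) ∈ FBar F α (q : X × ℝ)}

/-- The image of a set under the embedding `ι : x ↦ (x,0)`. -/
def iotaImg {X : Type*} (A : Set X) : Set (X × ℝ) :=
  (fun x => (x, (0 : ℝ))) '' A

/-!
Every point of `ι(P₁)` lies in `X̄` at level `0`, and `F̄` moves the first coordinate exactly
as `F` does, so (a) and the invariant part in (c) are those of `P` read through `ι`.
For (b): from a point of `P₁ \ P₂` the map `F̄` goes to level `α = 0`, so an exit from `ι(P₁)`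
projects to an exit from `P₁`, while images of `P₂` lie in `(F(P₁) \ P₁) ∪ P₂`; the closure of
either meets `P₁` only in `P₂`. For the interiors in (c) and (d): a point of `X̄` over
`int N \ P₂` at level `< 1` is at level `0` over `P₁ \ P₂`, so `ι(P₁ \ P₂)` is open in `X̄`.
-/

section MultivaluedMaps

variable {Y Z : Type*}

lemma mem_mvImage {F : Y → Set Y} {A : Set Y} {y : Y} :
    y ∈ MVImage F A ↔ ∃ x ∈ A, y ∈ F x := by
  simp [MVImage]

lemma mvImage_mono {F : Y → Set Y} {A B : Set Y} (h : A ⊆ B) : MVImage F A ⊆ MVImage F B :=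
  biUnion_subset_biUnion_left h

lemma invPart_subset (F : Y → Set Y) (N : Set Y) : InvPart F N ⊆ N := by
  rintro _ ⟨σ, hσN, rfl, -⟩
  exact hσN 0

lemma invPart_mono {F : Y → Set Y} {N N' : Set Y} (h : N ⊆ N') :
    InvPart F N ⊆ InvPart F N' := by
  rintro _ ⟨σ, hσN, hσ0, hσF⟩
  exact ⟨σ, fun n => h (hσN n), hσ0, hσF⟩

lemma mapsTo_invPart {F : Y → Set Y} {G : Z → Set Z} {g : Y → Z}
    (hg : ∀ y, ∀ y' ∈ F y, g y' ∈ G (g y)) (M : Set Z) :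
    MapsTo g (InvPart F (g ⁻¹' M)) (InvPart G M) := by
  rintro _ ⟨σ, hσM, rfl, hσF⟩
  exact ⟨g ∘ σ, hσM, rfl, fun n => hg _ _ (hσF n)⟩

end MultivaluedMaps

namespace IsWeakIndexPair

variable {Y : Type*} [TopologicalSpace Y] {F : Y → Set Y} {N P₁ P₂ : Set Y}

lemma mvImage_subset (hP : IsWeakIndexPair F N P₁ P₂) :
    MVImage F P₂ ⊆ (MVImage F P₁ \ P₁) ∪ P₂ := by
  intro y hy
  by_cases hy₁ : y ∈ P₁
  · exact Or.inr (hP.mapsInto₂ ⟨hy, hP.subset₁N hy₁⟩)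
  · exact Or.inl ⟨mvImage_mono hP.subset₂₁ hy, hy₁⟩

lemma closure_inter_closure_subset [T2Space Y] (hP : IsWeakIndexPair F N P₁ P₂) {S : Set Y}
    (hS : S ⊆ (MVImage F P₁ \ P₁) ∪ P₂) : closure P₁ ∩ closure S ⊆ P₂ :=
  calc closure P₁ ∩ closure S
      ⊆ closure P₁ ∩ (closure (MVImage F P₁ \ P₁) ∪ closure P₂) := by
        rw [← closure_union]
        exact inter_subset_inter_right _ (closure_mono hS)
    _ = FBoundary F P₁ ∪ closure P₁ ∩ closure P₂ := inter_union_distrib_left ..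
    _ ⊆ P₂ := union_subset hP.fBoundary_subset
        (inter_subset_right.trans hP.compact₂.isClosed.closure_subset)

end IsWeakIndexPair

section Iota

variable {X : Type*}

@[simp]
lemma mem_iotaImg {A : Set X} {p : X × ℝ} : p ∈ iotaImg A ↔ p.1 ∈ A ∧ p.2 = 0 := by
  constructor
  · rintro ⟨x, hx, rfl⟩
    exact ⟨hx, rfl⟩
  · rintro ⟨h₁, h₂⟩
    exact ⟨p.1, h₁, Prod.ext rfl h₂.symm⟩

lemma iotaImg_eq_prod (A : Set X) : iotaImg A = A ×ˢ {0} := by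
  ext p
  simp

lemma iotaImg_mono {A B : Set X} (h : A ⊆ B) : iotaImg A ⊆ iotaImg B :=
  image_mono h

lemma iotaImg_sdiff (A B : Set X) : iotaImg (A \ B) = iotaImg A \ iotaImg B :=
  image_sdiff (fun _ _ h => congrArg Prod.fst h) A B

lemma muBar_of_snd_eq_zero {α : X → ℝ} {p : X × ℝ} (hp : p.2 = 0) : muBar α p = α p.1 := by
  simp [muBar, hp]

variable [TopologicalSpace X]

lemma isClosed_iotaImg {A : Set X} (hA : IsClosed A) : IsClosed (iotaImg A) :=
  iotaImg_eq_prod A ▸ hA.prod isClosed_singleton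

lemma isCompact_iotaImg {A : Set X} (hA : IsCompact A) : IsCompact (iotaImg A) :=
  iotaImg_eq_prod A ▸ hA.prod isCompact_singleton

end Iota

section XBar

variable {X : Type*} [TopologicalSpace X] {F : X → Set X} {α : X → ℝ} {N P₁ P₂ : Set X}

lemma iotaImg_subset_xBarSet {A : Set X} (hA : A ⊆ P₁ ∪ (interior N)ᶜ) :
    iotaImg A ⊆ XBarSet N P₁ P₂ := by
  rintro _ ⟨x, hx, rfl⟩
  by_cases hx₂ : x ∈ P₂
  · exact Or.inl (Or.inr ⟨Or.inl hx₂, left_mem_Icc.2 zero_le_one⟩)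
  rcases hA hx with hx₁ | hxN
  · exact Or.inl (Or.inl ⟨⟨hx₁, hx₂⟩, rfl⟩)
  · exact Or.inl (Or.inr ⟨Or.inr hxN, left_mem_Icc.2 zero_le_one⟩)

lemma isCompact_preimage_iotaImg {A : Set X} (hA : IsCompact A)
    (hAX : A ⊆ P₁ ∪ (interior N)ᶜ) :
    IsCompact (Subtype.val ⁻¹' iotaImg A : Set (XBarSet N P₁ P₂)) :=
  (IsInducing.subtypeVal.isCompact_preimage_iff
    (by rw [Subtype.range_coe]; exact iotaImg_subset_xBarSet hAX)).2 (isCompact_iotaImg hA)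

lemma xBarSet_inter_prod_Iio_subset :
    XBarSet N P₁ P₂ ∩ (interior N \ P₂) ×ˢ Iio 1 ⊆ iotaImg (P₁ \ P₂) := by
  rintro ⟨x, t⟩ ⟨(⟨hx, ht⟩ | ⟨hx | hx, -⟩) | ⟨-, ht⟩, ⟨hxN, hx₂⟩, ht₁⟩
  · exact mem_iotaImg.2 ⟨hx, ht⟩
  · exact absurd hx hx₂
  · exact absurd hxN hx
  · exact absurd ht (ne_of_lt ht₁)

lemma isOpen_preimage_iotaImg_sdiff (hP₂ : IsClosed P₂) (hdiff : P₁ \ P₂ ⊆ interior N) :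
    IsOpen (Subtype.val ⁻¹' iotaImg (P₁ \ P₂) : Set (XBarSet N P₁ P₂)) := by
  have h : (Subtype.val ⁻¹' iotaImg (P₁ \ P₂) : Set (XBarSet N P₁ P₂)) =
      Subtype.val ⁻¹' (interior N \ P₂) ×ˢ Iio 1 := by
    refine Subset.antisymm (fun q hq => ?_) fun q hq => xBarSet_inter_prod_Iio_subset ⟨q.2, hq⟩
    obtain ⟨hx, hq₀⟩ := mem_iotaImg.1 hq
    exact ⟨⟨hdiff hx, hx.2⟩, by rw [mem_Iio, hq₀]; exact zero_lt_one⟩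
  exact h ▸ ((isOpen_interior.sdiff hP₂).prod isOpen_Iio).preimage continuous_subtype_val

lemma mvImage_fBarSub_inter_subset {A M : Set X} (hA : MVImage F A ∩ M ⊆ A) :
    MVImage (FBarSub F α N P₁ P₂) (Subtype.val ⁻¹' iotaImg A) ∩ Subtype.val ⁻¹' iotaImg M ⊆
      Subtype.val ⁻¹' iotaImg A := by
  rintro r ⟨hr, hrM⟩
  obtain ⟨q, hq, hrq⟩ := mem_mvImage.1 hr
  simp only [mem_preimage, mem_iotaImg] at hq hrM ⊢
  exact ⟨hA ⟨mem_mvImage.2 ⟨_, hq.1, hrq.1⟩, hrM.1⟩, hrM.2⟩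

lemma fst_mem_of_mem_mvImage_fBarSub_sdiff (hP : IsWeakIndexPair F N P₁ P₂)
    (hα : ∀ x ∈ P₁ \ P₂, α x = 0) {r : XBarSet N P₁ P₂}
    (hr : r ∈ MVImage (FBarSub F α N P₁ P₂) (Subtype.val ⁻¹' iotaImg P₁) \
      Subtype.val ⁻¹' iotaImg P₁) :
    (r : X × ℝ).1 ∈ (MVImage F P₁ \ P₁) ∪ P₂ := by
  obtain ⟨hrF, hr₁⟩ := hr
  obtain ⟨q, hq, hrq₁, hrq₂⟩ := mem_mvImage.1 hrF
  rw [mem_preimage, mem_iotaImg] at hq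
  by_cases hq₂ : (q : X × ℝ).1 ∈ P₂
  · exact hP.mvImage_subset (mem_mvImage.2 ⟨_, hq₂, hrq₁⟩)
  · have hr₀ : (r : X × ℝ).2 = 0 := by
      rw [hrq₂, muBar_of_snd_eq_zero hq.2, hα _ ⟨hq.1, hq₂⟩]
    exact Or.inl ⟨mem_mvImage.2 ⟨_, hq.1, hrq₁⟩, fun h => hr₁ (mem_iotaImg.2 ⟨h, hr₀⟩)⟩

lemma fBoundary_fBarSub_subset [T2Space X] (hP : IsWeakIndexPair F N P₁ P₂)
    (hα : ∀ x ∈ P₁ \ P₂, α x = 0) :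
    FBoundary (FBarSub F α N P₁ P₂) (Subtype.val ⁻¹' iotaImg P₁) ⊆
      Subtype.val ⁻¹' iotaImg P₂ := by
  rintro q ⟨hq₁, hq₂⟩
  obtain ⟨hx, hq₀⟩ := mem_iotaImg.1 <| ((isClosed_iotaImg hP.compact₁.isClosed).preimage
    continuous_subtype_val).closure_subset hq₁
  have hx_exit : (q : X × ℝ).1 ∈ closure ((MVImage F P₁ \ P₁) ∪ P₂) :=
    closure_mono (image_subset_iff.2 fun r hr => fst_mem_of_mem_mvImage_fBarSub_sdiff hP hα hr)
      (image_closure_subset_closure_image (continuous_fst.comp continuous_subtype_val)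
        ⟨q, hq₂, rfl⟩)
  exact mem_iotaImg.2 ⟨hP.closure_inter_closure_subset subset_rfl ⟨subset_closure hx, hx_exit⟩,
    hq₀⟩

lemma invPart_fBarSub_subset (hP : IsWeakIndexPair F N P₁ P₂) {M : Set X} (hM : M ⊆ N) :
    InvPart (FBarSub F α N P₁ P₂) (Subtype.val ⁻¹' iotaImg M) ⊆
      Subtype.val ⁻¹' iotaImg (P₁ \ P₂) := by
  intro q hq
  have hM_fst : (Subtype.val ⁻¹' iotaImg M : Set (XBarSet N P₁ P₂)) ⊆
      (fun q : XBarSet N P₁ P₂ => (q : X × ℝ).1) ⁻¹' M := fun _ h => (mem_iotaImg.1 h).1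
  have hx : (q : X × ℝ).1 ∈ InvPart F N :=
    invPart_mono hM <| mapsTo_invPart (F := FBarSub F α N P₁ P₂) (fun _ _ h => h.1) M
      (invPart_mono hM_fst hq)
  have hq₀ := (mem_iotaImg.1 (mem_preimage.1 (invPart_subset _ _ hq))).2
  exact mem_iotaImg.2 ⟨interior_subset (hP.inv_subset hx), hq₀⟩

end XBar

theorem pBar_weakIndexPair_general {X : Type*} [TopologicalSpace X]
    [T1Space X] [NormalSpace X]
    (F : X → Set X)
    (N : Set X)
    (P₁ P₂ : Set X) (hP : IsWeakIndexPair F N P₁ P₂)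
    (C : Set X)
    (hclC : closure (P₁ \ P₂) ⊆ C)
    (α : X → ℝ)
    (hαC : ∀ x ∈ C, α x = 0) :
    IsWeakIndexPair (FBarSub F α N P₁ P₂)
      (Subtype.val ⁻¹' iotaImg ((P₁ ∪ (interior N)ᶜ) ∩ N))
      (Subtype.val ⁻¹' iotaImg P₁)
      (Subtype.val ⁻¹' iotaImg P₂) := by
  have hα : ∀ x ∈ P₁ \ P₂, α x = 0 := fun x hx => hαC x (hclC (subset_closure hx))
  have hNbar_sub : (P₁ ∪ (interior N)ᶜ) ∩ N ⊆ N := inter_subset_right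
  have hopen := isOpen_preimage_iotaImg_sdiff (N := N) hP.compact₂.isClosed hP.diff_subset
  have hdiff : (Subtype.val ⁻¹' iotaImg P₁ \ Subtype.val ⁻¹' iotaImg P₂ : Set (XBarSet N P₁ P₂)) =
      Subtype.val ⁻¹' iotaImg (P₁ \ P₂) := by
    rw [iotaImg_sdiff, preimage_sdiff]
  exact
  { compact₁ := isCompact_preimage_iotaImg hP.compact₁ subset_union_left
    compact₂ := isCompact_preimage_iotaImg hP.compact₂ (hP.subset₂₁.trans subset_union_left)
    subset₂₁ := preimage_mono (iotaImg_mono hP.subset₂₁)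
    subset₁N := preimage_mono (iotaImg_mono fun x hx => ⟨Or.inl hx, hP.subset₁N hx⟩)
    mapsInto₁ := mvImage_fBarSub_inter_subset
      ((inter_subset_inter_right _ hNbar_sub).trans hP.mapsInto₁)
    mapsInto₂ := mvImage_fBarSub_inter_subset
      ((inter_subset_inter_right _ hNbar_sub).trans hP.mapsInto₂)
    fBoundary_subset := fBoundary_fBarSub_subset hP hα
    inv_subset := hdiff ▸ (invPart_fBarSub_subset hP hNbar_sub).trans hopen.interior_eq.superset
    diff_subset := hdiff ▸ hopen.subset_interior_iff.2
      (preimage_mono (iotaImg_mono fun x hx => ⟨Or.inl hx.1, hP.subset₁N hx.1⟩)) }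

/-- With `N̄ := ι((P₁ ∪ (X \ int N)) ∩ N)` and `P̄ := (ι(P₁), ι(P₂))`, the pair
`P̄` is a weak index pair for `F̄` in `N̄`. -/
theorem pBar_weakIndexPair {X : Type*} [TopologicalSpace X]
    [T1Space X] [NormalSpace X] [LocallyCompactSpace X]
    (F : X → Set X) (hF : IsUSC F) (hFc : ∀ x, IsCompact (F x))
    (N : Set X) (hN : IsCompact N) (hiso : InvPart F N ⊆ interior N)
    (P₁ P₂ : Set X) (hP : IsWeakIndexPair F N P₁ P₂)
    (C D : Set X) (hC : IsCompact C) (hD : IsCompact D) (hCD : Disjoint C D)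
    (hCsub : C ⊆ P₁ ∪ (interior N)ᶜ) (hDsub : D ⊆ P₁ ∪ (interior N)ᶜ)
    (hclC : closure (P₁ \ P₂) ⊆ C) (hDcompl : (interior N)ᶜ ⊆ D)
    (α : X → ℝ) (hα : Continuous α) (hα01 : ∀ x, α x ∈ Icc (0 : ℝ) 1)
    (hαC : ∀ x ∈ C, α x = 0) (hαD : ∀ x ∈ D, α x = 1) :
    IsWeakIndexPair (FBarSub F α N P₁ P₂)
      (Subtype.val ⁻¹' iotaImg ((P₁ ∪ (interior N)ᶜ) ∩ N))
      (Subtype.val ⁻¹' iotaImg P₁)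
      (Subtype.val ⁻¹' iotaImg P₂) :=
  pBar_weakIndexPair_general F N P₁ P₂ hP C hclC α hαC
end

section
/- Let X be a metric space, F : X → 𝒫(X) an upper semicontinuous multivalued map with compact values, and N ⊆ X compact. If the effective domain D(F_{N,n}) is nonempty for every n ∈ ℤ⁺, then Inv N ≠ ∅. Moreover, Inv⁺N = ⋂_{n ∈ ℤ⁺} D(F_{N,n}), Inv⁻N = ⋂_{n ∈ ℤ⁻} D(F_{N,n}), and Inv N = ⋂_{n ∈ ℤ} D(F_{N,n}). -/
open Set Topology

/-- The positive invariant part of `N` with respect to `F`: points admitting a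
forward solution (in `N`) through them. -/
def InvPlus {Y : Type*} (F : Y → Set Y) (N : Set Y) : Set Y :=
  {y | ∃ σ : ℕ → Y, (∀ n : ℕ, σ n ∈ N) ∧ σ 0 = y ∧ ∀ n : ℕ, σ (n + 1) ∈ F (σ n)}

/-- The negative invariant part of `N` with respect to `F`: points admitting a
backward solution (in `N`) through them (`σ k` stands for the value at `-k`). -/
def InvMinus {Y : Type*} (F : Y → Set Y) (N : Set Y) : Set Y :=
  {y | ∃ σ : ℕ → Y, (∀ n : ℕ, σ n ∈ N) ∧ σ 0 = y ∧ ∀ n : ℕ, σ n ∈ F (σ (n + 1))}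

/-- `FN F N n x` is the set of points reachable from `x` by a solution of
length `n` staying in `N` (the map `F_{N,n}`). -/
def FN {Y : Type*} (F : Y → Set Y) (N : Set Y) (n : ℕ) (x : Y) : Set Y :=
  {y | ∃ σ : ℕ → Y, σ 0 = x ∧ σ n = y ∧ (∀ k ≤ n, σ k ∈ N) ∧
    ∀ k < n, σ (k + 1) ∈ F (σ k)}

/-- `FNneg F N n x` is the set of points from which `x` is reachable by a
solution of length `n` staying in `N` (the map `F_{N,-n}`). -/
def FNneg {Y : Type*} (F : Y → Set Y) (N : Set Y) (n : ℕ) (x : Y) : Set Y :=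
  {y | ∃ σ : ℕ → Y, σ 0 = y ∧ σ n = x ∧ (∀ k ≤ n, σ k ∈ N) ∧
    ∀ k < n, σ (k + 1) ∈ F (σ k)}

/-- The map `F_N⁺`. -/
def FNplus {Y : Type*} (F : Y → Set Y) (N : Set Y) (x : Y) : Set Y :=
  ⋃ n : ℕ, FN F N n x

/-- The map `F_N⁻`. -/
def FNminus {Y : Type*} (F : Y → Set Y) (N : Set Y) (x : Y) : Set Y :=
  ⋃ n : ℕ, FNneg F N n x

section Aux

variable {X : Type*} [MetricSpace X] (F : X → Set X) (N : Set X)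

lemma graphClosed (hF : IsUSC F) (hFc : ∀ x, IsCompact (F x)) :
    IsClosed {p : X × X | p.2 ∈ F p.1} := by
  rw [← isSeqClosed_iff_isClosed]
  intro u p hu hp
  have h1 : Filter.Tendsto (fun n => (u n).1) Filter.atTop (nhds p.1) :=
    (continuous_fst.tendsto p).comp hp
  have h2 : Filter.Tendsto (fun n => (u n).2) Filter.atTop (nhds p.2) :=
    (continuous_snd.tendsto p).comp hp
  have hcl : p.2 ∈ closure (F p.1) := by
    rw [Metric.mem_closure_iff]
    intro ε hε
    have hS := hF (Metric.closedBall p.2 (ε/2)) Metric.isClosed_closedBall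
    have hev : ∀ᶠ n in Filter.atTop,
        (u n).1 ∈ {y | (F y ∩ Metric.closedBall p.2 (ε/2)).Nonempty} := by
      filter_upwards [Metric.tendsto_nhds.mp h2 (ε/2) (by positivity)] with n hn
      exact ⟨(u n).2, hu n, Metric.mem_closedBall.mpr (le_of_lt hn)⟩
    have := hS.mem_of_tendsto h1 hev
    obtain ⟨w, hw, hwb⟩ := this
    exact ⟨w, hw, by
      have := Metric.mem_closedBall.mp hwb
      rw [dist_comm] at this
      linarith⟩
  rwa [(hFc p.1).isClosed.closure_eq] at hcl

/-- Solutions of length `n` in `N`, extended to all of `ℕ` (values beyond `n`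
unconstrained except membership in `N`). -/
def solSet (n : ℕ) : Set (ℕ → X) :=
  {σ | (∀ k, σ k ∈ N) ∧ ∀ k < n, σ (k + 1) ∈ F (σ k)}

lemma isClosed_memN (hN : IsClosed N) : IsClosed {σ : ℕ → X | ∀ k, σ k ∈ N} := by
  have : {σ : ℕ → X | ∀ k, σ k ∈ N} = ⋂ k, (fun σ : ℕ → X => σ k) ⁻¹' N := by
    ext σ; simp
  rw [this]
  exact isClosed_iInter fun k => hN.preimage (continuous_apply k)

lemma solSet_closed (hG : IsClosed {p : X × X | p.2 ∈ F p.1}) (hN : IsClosed N) (n : ℕ) :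
    IsClosed (solSet F N n) := by
  have h2 : IsClosed {σ : ℕ → X | ∀ k < n, σ (k + 1) ∈ F (σ k)} := by
    have : {σ : ℕ → X | ∀ k < n, σ (k + 1) ∈ F (σ k)} =
        ⋂ k, ⋂ _ : k < n,
          (fun σ : ℕ → X => (σ k, σ (k + 1))) ⁻¹' {p : X × X | p.2 ∈ F p.1} := by
      ext σ; simp
    rw [this]
    exact isClosed_iInter fun k => isClosed_iInter fun _ =>
      hG.preimage ((continuous_apply k).prodMk (continuous_apply (k + 1)))
  exact (isClosed_memN N hN).inter h2

lemma solSet_compact (hG : IsClosed {p : X × X | p.2 ∈ F p.1}) (hN : IsCompact N) (n : ℕ) :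
    IsCompact (solSet F N n) :=
  (isCompact_univ_pi fun _ : ℕ => hN).of_isClosed_subset
    (solSet_closed F N hG hN.isClosed n) (fun σ hσ k _ => hσ.1 k)

lemma solSet_extend {n : ℕ} (τ : ℕ → X) (hm : ∀ k ≤ n, τ k ∈ N)
    (hr : ∀ k < n, τ (k + 1) ∈ F (τ k)) :
    ∃ σ ∈ solSet F N n, ∀ k ≤ n, σ k = τ k := by
  refine ⟨fun k => τ (min k n), ⟨fun k => hm _ (min_le_right _ _), fun k hk => ?_⟩,
    fun k hk => by simp only [min_eq_left hk]⟩
  have h1 : min k n = k := min_eq_left hk.le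
  have h2 : min (k + 1) n = k + 1 := min_eq_left hk
  simp only [h1, h2]
  exact hr k hk

lemma FN_dom_eq (n : ℕ) :
    {x | (FN F N n x).Nonempty} = (fun σ : ℕ → X => σ 0) '' solSet F N n := by
  ext x
  constructor
  · rintro ⟨y, τ, h0, hn, hm, hr⟩
    obtain ⟨σ, hσ, heq⟩ := solSet_extend F N τ hm hr
    exact ⟨σ, hσ, (heq 0 (Nat.zero_le n)).trans h0⟩
  · rintro ⟨σ, hσ, rfl⟩
    exact ⟨σ n, σ, rfl, rfl, fun k _ => hσ.1 k, hσ.2⟩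

lemma FNneg_dom_eq (n : ℕ) :
    {x | (FNneg F N n x).Nonempty} = (fun σ : ℕ → X => σ n) '' solSet F N n := by
  ext x
  constructor
  · rintro ⟨y, τ, h0, hn, hm, hr⟩
    obtain ⟨σ, hσ, heq⟩ := solSet_extend F N τ hm hr
    exact ⟨σ, hσ, (heq n le_rfl).trans hn⟩
  · rintro ⟨σ, hσ, rfl⟩
    exact ⟨σ 0, σ, rfl, rfl, fun k _ => hσ.1 k, hσ.2⟩

lemma mem_invPlus_of_forall_FN (hF : IsUSC F) (hFc : ∀ x, IsCompact (F x))
    (hN : IsCompact N) {x : X} (h : ∀ n, (FN F N n x).Nonempty) :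
    x ∈ InvPlus F N := by
  have hG := graphClosed F hF hFc
  set C : ℕ → Set (ℕ → X) := fun n => solSet F N n ∩ {σ | σ 0 = x} with hC
  have hCc : ∀ n, IsClosed (C n) := fun n =>
    (solSet_closed F N hG hN.isClosed n).inter
      (isClosed_singleton.preimage (continuous_apply 0))
  have hCd : ∀ n, C (n + 1) ⊆ C n := fun n σ hσ =>
    ⟨⟨hσ.1.1, fun k hk => hσ.1.2 k (hk.trans (Nat.lt_succ_self n))⟩, hσ.2⟩
  have hCn : ∀ n, (C n).Nonempty := by
    intro n
    obtain ⟨y, τ, h0, hn, hm, hr⟩ := h n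
    obtain ⟨σ, hσ, heq⟩ := solSet_extend F N τ hm hr
    exact ⟨σ, hσ, by rw [Set.mem_setOf_eq, heq 0 (Nat.zero_le n), h0]⟩
  have hC0 : IsCompact (C 0) :=
    (solSet_compact F N hG hN 0).of_isClosed_subset (hCc 0) Set.inter_subset_left
  obtain ⟨σ, hσ⟩ := IsCompact.nonempty_iInter_of_sequence_nonempty_isCompact_isClosed
    C hCd hCn hC0 hCc
  simp only [Set.mem_iInter] at hσ
  exact ⟨σ, fun k => (hσ 0).1.1 k, (hσ 0).2,
    fun k => (hσ (k + 1)).1.2 k (Nat.lt_succ_self k)⟩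

/-- Reverse solutions of length `n` in `N`. -/
def solSetR (n : ℕ) : Set (ℕ → X) :=
  {σ | (∀ k, σ k ∈ N) ∧ ∀ k < n, σ k ∈ F (σ (k + 1))}

lemma solSetR_closed (hG : IsClosed {p : X × X | p.2 ∈ F p.1}) (hN : IsClosed N) (n : ℕ) :
    IsClosed (solSetR F N n) := by
  have h2 : IsClosed {σ : ℕ → X | ∀ k < n, σ k ∈ F (σ (k + 1))} := by
    have : {σ : ℕ → X | ∀ k < n, σ k ∈ F (σ (k + 1))} =
        ⋂ k, ⋂ _ : k < n,
          (fun σ : ℕ → X => (σ (k + 1), σ k)) ⁻¹' {p : X × X | p.2 ∈ F p.1} := by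
      ext σ; simp
    rw [this]
    exact isClosed_iInter fun k => isClosed_iInter fun _ =>
      hG.preimage ((continuous_apply (k + 1)).prodMk (continuous_apply k))
  exact (isClosed_memN N hN).inter h2

lemma mem_invMinus_of_forall_FNneg (hF : IsUSC F) (hFc : ∀ x, IsCompact (F x))
    (hN : IsCompact N) {x : X} (h : ∀ n, (FNneg F N n x).Nonempty) :
    x ∈ InvMinus F N := by
  have hG := graphClosed F hF hFc
  set C : ℕ → Set (ℕ → X) := fun n => solSetR F N n ∩ {σ | σ 0 = x} with hC
  have hCc : ∀ n, IsClosed (C n) := fun n =>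
    (solSetR_closed F N hG hN.isClosed n).inter
      (isClosed_singleton.preimage (continuous_apply 0))
  have hCd : ∀ n, C (n + 1) ⊆ C n := fun n σ hσ =>
    ⟨⟨hσ.1.1, fun k hk => hσ.1.2 k (hk.trans (Nat.lt_succ_self n))⟩, hσ.2⟩
  have hCn : ∀ n, (C n).Nonempty := by
    intro n
    obtain ⟨y, τ, h0, hn, hm, hr⟩ := h n
    refine ⟨fun k => τ (n - k), ⟨⟨fun k => hm _ (Nat.sub_le n k), fun k hk => ?_⟩, ?_⟩⟩
    · have h1 : n - k = (n - (k + 1)) + 1 := by omega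
      have := hr (n - (k + 1)) (by omega)
      simp only [← h1] at this
      simpa using this
    · simpa [Nat.sub_zero] using hn
  have hC0 : IsCompact (C 0) :=
    ((isCompact_univ_pi fun _ : ℕ => hN).of_isClosed_subset
      (solSetR_closed F N hG hN.isClosed 0) (fun σ hσ k _ => hσ.1 k)).of_isClosed_subset
      (hCc 0) Set.inter_subset_left
  obtain ⟨σ, hσ⟩ := IsCompact.nonempty_iInter_of_sequence_nonempty_isCompact_isClosed
    C hCd hCn hC0 hCc
  simp only [Set.mem_iInter] at hσ
  exact ⟨σ, fun k => (hσ 0).1.1 k, (hσ 0).2,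
    fun k => (hσ (k + 1)).1.2 k (Nat.lt_succ_self k)⟩

end Aux


/-- If the effective domain of `F_{N,n}` is nonempty for every `n ∈ ℤ⁺`, then
`Inv N ≠ ∅`; moreover `Inv⁺N`, `Inv⁻N` and `Inv N` coincide with the
corresponding intersections of the effective domains `D(F_{N,n})`. -/
theorem invPart_nonempty_and_eq_iInter_domains {X : Type*} [MetricSpace X]
    (F : X → Set X) (hF : IsUSC F) (hFc : ∀ x, IsCompact (F x))
    (N : Set X) (hN : IsCompact N)
    (h : ∀ n : ℕ, {x | (FN F N n x).Nonempty}.Nonempty) :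
    (InvPart F N).Nonempty ∧
    InvPlus F N = ⋂ n : ℕ, {x | (FN F N n x).Nonempty} ∧
    InvMinus F N = ⋂ n : ℕ, {x | (FNneg F N n x).Nonempty} ∧
    InvPart F N =
      (⋂ n : ℕ, {x | (FN F N n x).Nonempty}) ∩
      (⋂ n : ℕ, {x | (FNneg F N n x).Nonempty}) := by
  have hG := graphClosed F hF hFc
  -- Part 2 : InvPlus
  have hplus : InvPlus F N = ⋂ n : ℕ, {x | (FN F N n x).Nonempty} := by
    ext x
    simp only [Set.mem_iInter, Set.mem_setOf_eq]
    constructor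
    · rintro ⟨σ, hmem, h0, hrel⟩ n
      exact ⟨σ n, σ, h0, rfl, fun k _ => hmem k, fun k _ => hrel k⟩
    · intro hx
      exact mem_invPlus_of_forall_FN F N hF hFc hN hx
  -- Part 3 : InvMinus
  have hminus : InvMinus F N = ⋂ n : ℕ, {x | (FNneg F N n x).Nonempty} := by
    ext x
    simp only [Set.mem_iInter, Set.mem_setOf_eq]
    constructor
    · rintro ⟨σ, hmem, h0, hrel⟩ n
      refine ⟨σ n, fun k => σ (n - k), rfl, ?_, fun k _ => hmem _, fun k hk => ?_⟩
      · show σ (n - n) = x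
        rw [Nat.sub_self]; exact h0
      · show σ (n - (k + 1)) ∈ F (σ (n - k))
        have h1 : (n - (k + 1)) + 1 = n - k := by omega
        have := hrel (n - (k + 1))
        rwa [h1] at this
    · intro hx
      exact mem_invMinus_of_forall_FNneg F N hF hFc hN hx
  -- Part 4 : InvPart
  have hpart : InvPart F N =
      (⋂ n : ℕ, {x | (FN F N n x).Nonempty}) ∩
      (⋂ n : ℕ, {x | (FNneg F N n x).Nonempty}) := by
    ext x
    simp only [Set.mem_inter_iff, Set.mem_iInter, Set.mem_setOf_eq]
    constructor
    · rintro ⟨σ, hmem, h0, hrel⟩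
      constructor
      · intro n
        refine ⟨σ n, fun k => σ k, h0, rfl, fun k _ => hmem _, fun k _ => ?_⟩
        show σ ((k + 1 : ℕ) : ℤ) ∈ F (σ (k : ℤ))
        have h1 : ((k + 1 : ℕ) : ℤ) = (k : ℤ) + 1 := by push_cast; ring
        rw [h1]; exact hrel k
      · intro n
        refine ⟨σ ((0 : ℤ) - n), fun k => σ ((k : ℤ) - n), rfl, ?_,
          fun k _ => hmem _, fun k _ => ?_⟩
        · show σ ((n : ℤ) - n) = x
          rw [sub_self]; exact h0
        · show σ (((k + 1 : ℕ) : ℤ) - n) ∈ F (σ ((k : ℤ) - n))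
          have h1 : ((k + 1 : ℕ) : ℤ) - n = ((k : ℤ) - n) + 1 := by push_cast; ring
          rw [h1]; exact hrel _
    · rintro ⟨hA, hB⟩
      obtain ⟨σp, hpm, hp0, hpr⟩ := mem_invPlus_of_forall_FN F N hF hFc hN hA
      obtain ⟨σm, hmm, hm0, hmr⟩ := mem_invMinus_of_forall_FNneg F N hF hFc hN hB
      refine ⟨fun m => if 0 ≤ m then σp m.toNat else σm (-m).toNat, ?_, ?_, ?_⟩
      · intro m
        by_cases hm : 0 ≤ m <;> simp [hm, hpm, hmm]
      · simp [hp0]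
      · intro m
        show (if 0 ≤ m + 1 then σp (m + 1).toNat else σm (-(m + 1)).toNat) ∈
          F (if 0 ≤ m then σp m.toNat else σm (-m).toNat)
        by_cases hm : 0 ≤ m
        · have h1 : 0 ≤ m + 1 := by omega
          rw [if_pos hm, if_pos h1]
          have h2 : (m + 1).toNat = m.toNat + 1 := by omega
          rw [h2]; exact hpr _
        · rw [if_neg hm]
          have key : (if 0 ≤ m + 1 then σp (m + 1).toNat else σm (-(m + 1)).toNat) =
              σm (-(m + 1)).toNat := by
            by_cases h2 : 0 ≤ m + 1
            · have h3 : m + 1 = 0 := by omega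
              rw [if_pos h2, h3]
              show σp (0 : ℤ).toNat = σm (-(0 : ℤ)).toNat
              simp only [Int.toNat_zero, neg_zero]
              rw [hp0, hm0]
            · rw [if_neg h2]
          rw [key]
          have h3 : (-m).toNat = (-(m + 1)).toNat + 1 := by omega
          rw [h3]; exact hmr _
  -- Part 1 : nonemptiness
  have hA_compact : ∀ n, IsCompact {x | (FN F N n x).Nonempty} := fun n => by
    rw [FN_dom_eq]
    exact (solSet_compact F N hG hN n).image (continuous_apply 0)
  have hB_compact : ∀ n, IsCompact {x | (FNneg F N n x).Nonempty} := fun n => by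
    rw [FNneg_dom_eq]
    exact (solSet_compact F N hG hN n).image (continuous_apply n)
  have hAdec : ∀ n, {x | (FN F N (n + 1) x).Nonempty} ⊆ {x | (FN F N n x).Nonempty} := by
    rintro n x ⟨y, τ, h0, hn, hm, hr⟩
    exact ⟨τ n, τ, h0, rfl, fun k hk => hm k (by omega), fun k hk => hr k (by omega)⟩
  have hBdec : ∀ n, {x | (FNneg F N (n + 1) x).Nonempty} ⊆ {x | (FNneg F N n x).Nonempty} := by
    rintro n x ⟨y, τ, h0, hn, hm, hr⟩
    exact ⟨τ 1, fun k => τ (k + 1), rfl, hn, fun k hk => hm _ (by omega),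
      fun k hk => hr (k + 1) (by omega)⟩
  have hAint : (⋂ n, {x | (FN F N n x).Nonempty}).Nonempty :=
    IsCompact.nonempty_iInter_of_sequence_nonempty_isCompact_isClosed _
      hAdec h (hA_compact 0) (fun n => (hA_compact n).isClosed)
  obtain ⟨x0, hx0⟩ := hAint
  simp only [Set.mem_iInter, Set.mem_setOf_eq] at hx0
  obtain ⟨σ, hmem, h0, hrel⟩ := mem_invPlus_of_forall_FN F N hF hFc hN hx0
  set D : ℕ → Set X :=
    fun n => {x | (FN F N n x).Nonempty} ∩ {x | (FNneg F N n x).Nonempty} with hD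
  have hDne : ∀ n, (D n).Nonempty := by
    intro n
    refine ⟨σ n, ⟨σ (n + n), fun k => σ (n + k), rfl, rfl, fun k _ => hmem _,
      fun k _ => hrel (n + k)⟩, ⟨σ 0, σ, rfl, rfl, fun k _ => hmem k, fun k _ => hrel k⟩⟩
  have hDint : (⋂ n, D n).Nonempty :=
    IsCompact.nonempty_iInter_of_sequence_nonempty_isCompact_isClosed D
      (fun n x hx => ⟨hAdec n hx.1, hBdec n hx.2⟩) hDne
      ((hA_compact 0).inter_right (hB_compact 0).isClosed)
      (fun n => (hA_compact n).isClosed.inter (hB_compact n).isClosed)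
  obtain ⟨x1, hx1⟩ := hDint
  simp only [Set.mem_iInter, hD, Set.mem_inter_iff] at hx1
  refine ⟨⟨x1, ?_⟩, hplus, hminus, hpart⟩
  rw [hpart]
  exact ⟨Set.mem_iInter.mpr fun n => (hx1 n).1, Set.mem_iInter.mpr fun n => (hx1 n).2⟩
end

section
/- Let X be a metric space, F : X → 𝒫(X) an upper semicontinuous multivalued map with compact values, N ⊆ X compact, and let P = (P₁,P₂), Q = (Q₁,Q₂) be weak index pairs in N with P₁ ⊆ Q₁, P₂ ⊆ Q₂, and such that P₁ = Q₁ or P₂ = Q₂. Then there exist n ∈ ℕ and weak index pairs Q⁰, Q¹, …, Qⁿ in N with Q⁰ = Q, Qⁿ = P, Q^{k+1}ᵢ ⊆ Q^kᵢ for all k and i = 1,2, satisfying: (i) if Pᵢ = Qᵢ then Q^kᵢ = Pᵢ = Qᵢ for all k = 1,…,n−1 and i = 1,2; (ii) F(Q^kᵢ) ∩ N ⊆ Q^{k+1}ᵢ for all k = 0,…,n−1 and i = 1,2. -/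
open Set Topology

section Auxiliary

lemma mem_MVImage {Y : Type*} {F : Y → Set Y} {A : Set Y} {x : Y} :
    x ∈ MVImage F A ↔ ∃ y ∈ A, x ∈ F y := by simp [MVImage]

lemma MVImage_mono {Y : Type*} {F : Y → Set Y} {A B : Set Y} (h : A ⊆ B) :
    MVImage F A ⊆ MVImage F B := by
  intro x hx
  rcases mem_MVImage.mp hx with ⟨y, hy, hxy⟩
  exact mem_MVImage.mpr ⟨y, h hy, hxy⟩

lemma isClosed_mvGraph {X : Type*} [MetricSpace X] {F : X → Set X}
    (hF : IsUSC F) (hFc : ∀ x, IsCompact (F x)) :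
    IsClosed {p : X × X | p.2 ∈ F p.1} := by
  rw [← isOpen_compl_iff, isOpen_iff_mem_nhds]
  rintro ⟨x, y⟩ hxy
  simp only [Set.mem_compl_iff, Set.mem_setOf_eq] at hxy
  obtain ⟨r, hr, hball⟩ : ∃ r > 0, Disjoint (Metric.closedBall y r) (F x) := by
    rcases (F x).eq_empty_or_nonempty with h | h
    · exact ⟨1, one_pos, by simp [h]⟩
    · have hclosed : IsClosed (F x) := (hFc x).isClosed
      have hpos : 0 < Metric.infDist y (F x) :=
        (hclosed.notMem_iff_infDist_pos h).mp hxy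
      refine ⟨Metric.infDist y (F x) / 2, by linarith, ?_⟩
      rw [Set.disjoint_left]
      intro z hz hzF
      have h1 : Metric.infDist y (F x) ≤ dist y z := Metric.infDist_le_dist_of_mem hzF
      have h2 : dist z y ≤ Metric.infDist y (F x) / 2 := Metric.mem_closedBall.mp hz
      rw [dist_comm] at h1
      linarith
  have hU : IsOpen {z | (F z ∩ Metric.closedBall y r).Nonempty}ᶜ :=
    (hF _ Metric.isClosed_closedBall).isOpen_compl
  have hxU : x ∈ {z | (F z ∩ Metric.closedBall y r).Nonempty}ᶜ := by
    simp only [Set.mem_compl_iff, Set.mem_setOf_eq]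
    intro hne
    rcases hne with ⟨z, hz1, hz2⟩
    exact (Set.disjoint_right.mp hball hz1) hz2
  have : ({z | (F z ∩ Metric.closedBall y r).Nonempty}ᶜ ×ˢ Metric.ball y r) ∈ 𝓝 (x, y) :=
    prod_mem_nhds (hU.mem_nhds hxU) (Metric.ball_mem_nhds y hr)
  refine Filter.mem_of_superset this ?_
  rintro ⟨a, b⟩ ⟨ha, hb⟩
  simp only [Set.mem_compl_iff, Set.mem_setOf_eq] at ha ⊢
  intro hbF
  exact ha ⟨b, hbF, Metric.ball_subset_closedBall hb⟩

lemma isCompact_MVImage_inter {X : Type*} [MetricSpace X] {F : X → Set X}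
    (hF : IsUSC F) (hFc : ∀ x, IsCompact (F x)) {S N : Set X}
    (hS : IsCompact S) (hN : IsCompact N) :
    IsCompact (MVImage F S ∩ N) := by
  have heq : MVImage F S ∩ N =
      Prod.snd '' ({p : X × X | p.2 ∈ F p.1} ∩ S ×ˢ N) := by
    ext y
    constructor
    · rintro ⟨hy1, hy2⟩
      rcases mem_MVImage.mp hy1 with ⟨x, hx, hyx⟩
      exact ⟨(x, y), ⟨hyx, hx, hy2⟩, rfl⟩
    · rintro ⟨⟨x, z⟩, ⟨hz, hx, hzN⟩, rfl⟩
      exact ⟨mem_MVImage.mpr ⟨x, hx, hz⟩, hzN⟩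
  rw [heq]
  exact (((hS.prod hN).inter_left (isClosed_mvGraph hF hFc)).image continuous_snd)

/-- The canonical decreasing chain from `C` towards `D`. -/
def chainSeq {X : Type*} (F : X → Set X) (N D C : Set X) : ℕ → Set X
  | 0 => C
  | n + 1 => D ∪ (MVImage F (chainSeq F N D C n) ∩ N)

variable {X : Type*} (F : X → Set X) (N D C : Set X)

lemma chainSeq_succ_subset (hDC : D ⊆ C) (hC : MVImage F C ∩ N ⊆ C) :
    ∀ n, chainSeq F N D C (n + 1) ⊆ chainSeq F N D C n := by
  intro n
  induction n with
  | zero =>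
    intro x hx
    rcases hx with hx | hx
    · exact hDC hx
    · exact hC hx
  | succ n ih =>
    intro x hx
    rcases hx with hx | hx
    · exact Or.inl hx
    · exact Or.inr ⟨MVImage_mono ih hx.1, hx.2⟩

lemma chainSeq_subset (hDC : D ⊆ C) (hC : MVImage F C ∩ N ⊆ C) :
    ∀ n, chainSeq F N D C n ⊆ C := by
  intro n
  induction n with
  | zero => exact le_refl _
  | succ n ih => exact (chainSeq_succ_subset F N D C hDC hC n).trans ih

lemma subset_chainSeq (hDC : D ⊆ C) : ∀ n, D ⊆ chainSeq F N D C n := by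
  intro n
  cases n with
  | zero => exact hDC
  | succ n => exact subset_union_left

lemma chainSeq_eq_of_eq (hD : MVImage F D ∩ N ⊆ D) (h : C = D) :
    ∀ n, chainSeq F N D C n = D := by
  intro n
  induction n with
  | zero => exact h
  | succ n ih =>
    show D ∪ _ = D
    rw [ih]
    exact union_eq_self_of_subset_right hD

lemma chainSeq_mapsInto (hDC : D ⊆ C) (hC : MVImage F C ∩ N ⊆ C) (n : ℕ) :
    MVImage F (chainSeq F N D C n) ∩ N ⊆ chainSeq F N D C n :=
  fun _ hx => chainSeq_succ_subset F N D C hDC hC n (Or.inr hx)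

lemma chainSeq_isCompact {X : Type*} [MetricSpace X] {F : X → Set X}
    (hF : IsUSC F) (hFc : ∀ x, IsCompact (F x)) {N D C : Set X}
    (hN : IsCompact N) (hD : IsCompact D) (hC : IsCompact C) :
    ∀ n, IsCompact (chainSeq F N D C n) := by
  intro n
  induction n with
  | zero => exact hC
  | succ n ih => exact hD.union (isCompact_MVImage_inter hF hFc ih hN)

/-- Backward chains from points produced by the chain sequence. -/
lemma chainSeq_backward_chain {X : Type*} {F : X → Set X} {N D C : Set X}
    (hDC : D ⊆ C) (hC : MVImage F C ∩ N ⊆ C) (hD : MVImage F D ∩ N ⊆ D) :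
    ∀ m x, x ∈ (MVImage F (chainSeq F N D C m) ∩ N) \ D →
      ∃ g : ℕ → X, g 0 = x ∧ (∀ j, g j ∈ C \ D) ∧ ∀ j ≤ m, g j ∈ F (g (j + 1)) := by
  intro m
  induction m with
  | zero =>
    rintro x ⟨⟨hx1, hx2⟩, hx3⟩
    rcases mem_MVImage.mp hx1 with ⟨y, hy, hxy⟩
    have hyD : y ∉ D := fun hyD => hx3 (hD ⟨mem_MVImage.mpr ⟨y, hyD, hxy⟩, hx2⟩)
    refine ⟨fun j => Nat.casesOn j x (fun _ => y), rfl, ?_, ?_⟩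
    · intro j
      cases j with
      | zero => exact ⟨hC ⟨hx1, hx2⟩, hx3⟩
      | succ j => exact ⟨hy, hyD⟩
    · intro j hj
      interval_cases j
      exact hxy
  | succ m ih =>
    rintro x ⟨⟨hx1, hx2⟩, hx3⟩
    rcases mem_MVImage.mp hx1 with ⟨y, hy, hxy⟩
    have hyD : y ∉ D := fun hyD => hx3 (hD ⟨mem_MVImage.mpr ⟨y, hyD, hxy⟩, hx2⟩)
    have hy' : y ∈ (MVImage F (chainSeq F N D C m) ∩ N) \ D := by
      rcases hy with hy | hy
      · exact absurd hy hyD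
      · exact ⟨hy, hyD⟩
    rcases ih y hy' with ⟨g, hg0, hgC, hgrel⟩
    refine ⟨fun j => Nat.casesOn j x g, rfl, ?_, ?_⟩
    · intro j
      cases j with
      | zero =>
        refine ⟨chainSeq_subset F N D C hDC hC (m + 2) ?_, hx3⟩
        exact Or.inr ⟨hx1, hx2⟩
      | succ j => exact hgC j
    · intro j hj
      cases j with
      | zero => show x ∈ F (g 0); rw [hg0]; exact hxy
      | succ j => exact hgrel j (Nat.succ_le_succ_iff.mp hj)

/-- Key termination lemma: the canonical chain eventually gets absorbed in `D`. -/
lemma chain_terminates {X : Type*} [MetricSpace X] {F : X → Set X}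
    (hF : IsUSC F) (hFc : ∀ x, IsCompact (F x)) {N C D : Set X}
    (hCc : IsCompact C)
    (hCN : C ⊆ N) (hDC : D ⊆ C)
    (hC : MVImage F C ∩ N ⊆ C) (hD : MVImage F D ∩ N ⊆ D)
    (hdisj : InvPart F N ∩ closure (C \ D) = ∅) :
    ∃ n, MVImage F (chainSeq F N D C n) ∩ N ⊆ D := by
  by_contra hcon
  push_neg at hcon
  have hchains : ∀ n : ℕ, ∃ g : ℕ → X,
      (∀ j, g j ∈ C \ D) ∧ ∀ j ≤ 2 * n, g j ∈ F (g (j + 1)) := by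
    intro n
    rcases Set.not_subset.mp (hcon (2 * n)) with ⟨x, hx, hxD⟩
    rcases chainSeq_backward_chain hDC hC hD (2 * n) x ⟨hx, hxD⟩ with ⟨g, _, hgC, hgrel⟩
    exact ⟨g, hgC, hgrel⟩
  set S : ℕ → Set (ℤ → X) := fun n =>
    {σ | ∀ t, σ t ∈ C} ∩ {σ | σ 0 ∈ closure (C \ D)} ∩
      ⋂ (t : ℤ) (_ : -(n : ℤ) ≤ t) (_ : t < (n : ℤ)), {σ | σ (t + 1) ∈ F (σ t)} with hS
  have hSmem : ∀ (n : ℕ) (σ : ℤ → X), σ ∈ S n ↔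
      ((∀ t, σ t ∈ C) ∧ σ 0 ∈ closure (C \ D)) ∧
        ∀ t : ℤ, -(n : ℤ) ≤ t → t < (n : ℤ) → σ (t + 1) ∈ F (σ t) := by
    intro n σ
    simp only [hS, Set.mem_inter_iff, Set.mem_iInter, Set.mem_setOf_eq]
  have hSclosed : ∀ n, IsClosed (S n) := by
    intro n
    refine IsClosed.inter (IsClosed.inter ?_ ?_) ?_
    · have : {σ : ℤ → X | ∀ t, σ t ∈ C} = ⋂ t, (fun σ : ℤ → X => σ t) ⁻¹' C := by
        ext σ; simp
      rw [this]
      exact isClosed_iInter fun t => hCc.isClosed.preimage (continuous_apply t)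
    · exact isClosed_closure.preimage (continuous_apply 0)
    · refine isClosed_iInter fun t => isClosed_iInter fun _ => isClosed_iInter fun _ => ?_
      have : {σ : ℤ → X | σ (t + 1) ∈ F (σ t)} =
          (fun σ : ℤ → X => (σ t, σ (t + 1))) ⁻¹' {p : X × X | p.2 ∈ F p.1} := rfl
      rw [this]
      exact (isClosed_mvGraph hF hFc).preimage
        ((continuous_apply t).prodMk (continuous_apply (t + 1)))
  have hSmono : ∀ n, S (n + 1) ⊆ S n := by
    intro n σ hσ
    rw [hSmem] at hσ ⊢
    refine ⟨hσ.1, fun t ht1 ht2 => hσ.2 t (by omega) (by omega)⟩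
  have hSne : ∀ n, (S n).Nonempty := by
    intro n
    rcases hchains n with ⟨g, hgC, hgrel⟩
    refine ⟨fun t => g ((n - t).toNat), (hSmem n _).mpr ⟨⟨fun t => (hgC _).1, ?_⟩, ?_⟩⟩
    · show g (((n : ℤ) - 0).toNat) ∈ closure (C \ D)
      have : ((n : ℤ) - 0).toNat = n := by omega
      rw [this]
      exact subset_closure (hgC n)
    · intro t ht1 ht2
      have h1 : ((n : ℤ) - (t + 1)).toNat ≤ 2 * n := by omega
      have h2 : ((n : ℤ) - t).toNat = ((n : ℤ) - (t + 1)).toNat + 1 := by omega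
      rw [h2]
      exact hgrel _ h1
  have hS0c : IsCompact (S 0) := by
    refine (isCompact_univ_pi (fun _ : ℤ => hCc)).of_isClosed_subset (hSclosed 0) ?_
    intro σ hσ
    exact fun t _ => ((hSmem 0 σ).mp hσ).1.1 t
  obtain ⟨σ, hσ⟩ := IsCompact.nonempty_iInter_of_sequence_nonempty_isCompact_isClosed
    S hSmono hSne hS0c hSclosed
  simp only [Set.mem_iInter] at hσ
  have hσC : ∀ t, σ t ∈ C := ((hSmem 0 σ).mp (hσ 0)).1.1
  have hσcl : σ 0 ∈ closure (C \ D) := ((hSmem 0 σ).mp (hσ 0)).1.2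
  have hσrel : ∀ t : ℤ, σ (t + 1) ∈ F (σ t) := by
    intro t
    have hn := (hSmem (t.natAbs + 1) σ).mp (hσ (t.natAbs + 1))
    refine hn.2 t ?_ ?_ <;> omega
  have : σ 0 ∈ InvPart F N ∩ closure (C \ D) :=
    ⟨⟨σ, fun t => hCN (hσC t), rfl, hσrel⟩, hσcl⟩
  rw [hdisj] at this
  exact this

end Auxiliary

/-- If `P ⊆ Q` are weak index pairs in `N` with `P₁ = Q₁` or `P₂ = Q₂`, then
there is a decreasing finite chain of weak index pairs from `Q` to `P` such
that each pair absorbs the `F`-image (intersected with `N`) of the previous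
one. -/
theorem exists_chain_of_weakIndexPairs {X : Type*} [MetricSpace X]
    (F : X → Set X) (hF : IsUSC F) (hFc : ∀ x, IsCompact (F x))
    (N : Set X) (hN : IsCompact N)
    (P₁ P₂ Q₁ Q₂ : Set X)
    (hP : IsWeakIndexPair F N P₁ P₂) (hQ : IsWeakIndexPair F N Q₁ Q₂)
    (h₁ : P₁ ⊆ Q₁) (h₂ : P₂ ⊆ Q₂) (heq : P₁ = Q₁ ∨ P₂ = Q₂) :
    ∃ (n : ℕ) (A B : ℕ → Set X),
      A 0 = Q₁ ∧ B 0 = Q₂ ∧ A n = P₁ ∧ B n = P₂ ∧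
      (∀ k ≤ n, IsWeakIndexPair F N (A k) (B k)) ∧
      (∀ k < n, A (k + 1) ⊆ A k ∧ B (k + 1) ⊆ B k) ∧
      (P₁ = Q₁ → ∀ k, 1 ≤ k → k < n → A k = P₁) ∧
      (P₂ = Q₂ → ∀ k, 1 ≤ k → k < n → B k = P₂) ∧
      (∀ k < n, MVImage F (A k) ∩ N ⊆ A (k + 1) ∧
        MVImage F (B k) ∩ N ⊆ B (k + 1)) := by
  rcases heq with hPQ | hPQ
  · -- case `P₁ = Q₁`: the chain runs on the second components
    subst hPQ
    have hQ₂N : Q₂ ⊆ N := hQ.subset₂₁.trans hQ.subset₁N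
    have hdisj : InvPart F N ∩ closure (Q₂ \ P₂) = ∅ := by
      rw [Set.eq_empty_iff_forall_notMem]
      rintro x ⟨hx1, hx2⟩
      have h3 := hQ.inv_subset hx1
      rcases mem_closure_iff.mp hx2 _ isOpen_interior h3 with ⟨y, hy1, hy2⟩
      exact (interior_subset hy1).2 hy2.1
    obtain ⟨m, hm⟩ := chain_terminates hF hFc hQ.compact₂ hQ₂N h₂
      hQ.mapsInto₂ hP.mapsInto₂ hdisj
    refine ⟨m + 1, fun _ => P₁, chainSeq F N P₂ Q₂, rfl, rfl, rfl, ?_, ?_, ?_, ?_, ?_, ?_⟩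
    · exact union_eq_self_of_subset_right hm
    · intro k _
      exact {
        compact₁ := hQ.compact₁
        compact₂ := chainSeq_isCompact hF hFc hN hP.compact₂ hQ.compact₂ k
        subset₂₁ := (chainSeq_subset F N P₂ Q₂ h₂ hQ.mapsInto₂ k).trans hQ.subset₂₁
        subset₁N := hQ.subset₁N
        mapsInto₁ := hQ.mapsInto₁
        mapsInto₂ := chainSeq_mapsInto F N P₂ Q₂ h₂ hQ.mapsInto₂ k
        fBoundary_subset := hP.fBoundary_subset.trans (subset_chainSeq F N P₂ Q₂ h₂ k)
        inv_subset := hQ.inv_subset.trans (interior_mono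
          (Set.diff_subset_diff_right (chainSeq_subset F N P₂ Q₂ h₂ hQ.mapsInto₂ k)))
        diff_subset := fun x hx =>
          hP.diff_subset ⟨hx.1, fun hxP => hx.2 (subset_chainSeq F N P₂ Q₂ h₂ k hxP)⟩ }
    · exact fun k _ => ⟨subset_rfl, chainSeq_succ_subset F N P₂ Q₂ h₂ hQ.mapsInto₂ k⟩
    · exact fun _ k _ _ => rfl
    · exact fun h k _ _ => chainSeq_eq_of_eq F N P₂ Q₂ hP.mapsInto₂ h.symm k
    · exact fun k _ => ⟨fun x hx => hQ.mapsInto₁ hx, fun x hx => Or.inr hx⟩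
  · -- case `P₂ = Q₂`: the chain runs on the first components
    subst hPQ
    have hdisj : InvPart F N ∩ closure (Q₁ \ P₁) = ∅ := by
      rw [Set.eq_empty_iff_forall_notMem]
      rintro x ⟨hx1, hx2⟩
      have h3 := hP.inv_subset hx1
      rcases mem_closure_iff.mp hx2 _ isOpen_interior h3 with ⟨y, hy1, hy2⟩
      exact hy2.2 (interior_subset hy1).1
    obtain ⟨m, hm⟩ := chain_terminates hF hFc hQ.compact₁ hQ.subset₁N h₁
      hQ.mapsInto₁ hP.mapsInto₁ hdisj
    have hAsub : ∀ k, chainSeq F N P₁ Q₁ k ⊆ Q₁ :=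
      chainSeq_subset F N P₁ Q₁ h₁ hQ.mapsInto₁
    have hAmaps : ∀ k, MVImage F (chainSeq F N P₁ Q₁ k) ∩ N ⊆ chainSeq F N P₁ Q₁ k :=
      chainSeq_mapsInto F N P₁ Q₁ h₁ hQ.mapsInto₁
    refine ⟨m + 1, chainSeq F N P₁ Q₁, fun _ => P₂, rfl, rfl, ?_, rfl, ?_, ?_, ?_, ?_, ?_⟩
    · exact union_eq_self_of_subset_right hm
    · intro k _
      refine {
        compact₁ := chainSeq_isCompact hF hFc hN hP.compact₁ hQ.compact₁ k
        compact₂ := hP.compact₂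
        subset₂₁ := hP.subset₂₁.trans (subset_chainSeq F N P₁ Q₁ h₁ k)
        subset₁N := (hAsub k).trans hQ.subset₁N
        mapsInto₁ := hAmaps k
        mapsInto₂ := hP.mapsInto₂
        fBoundary_subset := ?_
        inv_subset := hP.inv_subset.trans (interior_mono
          (Set.diff_subset_diff_left (subset_chainSeq F N P₁ Q₁ h₁ k)))
        diff_subset := fun x hx => hQ.diff_subset ⟨hAsub k hx.1, hx.2⟩ }
      -- the F-boundary of the chain element is inside the F-boundary of Q₁
      refine Subset.trans ?_ hQ.fBoundary_subset
      refine Set.inter_subset_inter (closure_mono (hAsub k)) (closure_mono ?_)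
      rintro x ⟨hx1, hx2⟩
      have hxN : x ∉ N := fun hxN => hx2 (hAmaps k ⟨hx1, hxN⟩)
      exact ⟨MVImage_mono (hAsub k) hx1, fun hxQ => hxN (hQ.subset₁N hxQ)⟩
    · exact fun k _ => ⟨chainSeq_succ_subset F N P₁ Q₁ h₁ hQ.mapsInto₁ k, subset_rfl⟩
    · exact fun h k _ _ => chainSeq_eq_of_eq F N P₁ Q₁ hP.mapsInto₁ h.symm k
    · exact fun _ k _ _ => rfl
    · exact fun k _ => ⟨fun x hx => Or.inr hx, fun x hx => hP.mapsInto₂ hx⟩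
end
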